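/- arXiv:2101.08619 — 3 statements merged into one kernel-verified Lean document; each statement's English description precedes it below -/
import Mathlib

section
/- Let k ≥ 1 and let (G,σ) be a signed graph whose underlying graph G is bipartite. Then (G,σ) admits a homomorphism to (K_{k,k},M) if and only if (G,σ) admits a homomorphism to (K_{2k},M). -/
open SimpleGraph

/-- The sign of a walk in a signed graph `(G, σ)`: the product of the signs of its edges,
counted with multiplicity. -/
def walkSign {V : Type*} {G : SimpleGraph V} (σ : Sym2 V → ℤˣ) {u v : V}
    (w : G.Walk u v) : ℤˣ :=
  (w.edges.map σ).prod

/-- A homomorphism of signed graphs: a graph homomorphism which preserves the signs of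
closed walks. -/
def IsSignedHom {U V : Type*} (G : SimpleGraph U) (σ : Sym2 U → ℤˣ)
    (H : SimpleGraph V) (π : Sym2 V → ℤˣ) (f : G →g H) : Prop :=
  ∀ (u : U) (w : G.Walk u u), walkSign π (w.map f) = walkSign σ w

/-- `(G, σ)` admits a homomorphism to `(H, π)`. -/
def SignedHom {U V : Type*} (G : SimpleGraph U) (σ : Sym2 U → ℤˣ)
    (H : SimpleGraph V) (π : Sym2 V → ℤˣ) : Prop :=
  ∃ f : G →g H, IsSignedHom G σ H π f

/-- The signature on the complete graph `K_n` (with `n` even, vertices `0, …, n-1`) whose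
negative edges form the perfect matching `{01, 23, 45, …}`: the edge `uv` is negative iff
`u` and `v` lie in the same matched pair, i.e. `⌊u/2⌋ = ⌊v/2⌋`. -/
def matchSign (n : ℕ) : Sym2 (Fin n) → ℤˣ :=
  Sym2.lift ⟨fun a b => if (a : ℕ) / 2 = (b : ℕ) / 2 then -1 else 1, by
    intro a b
    simp only [eq_comm]⟩

/-- The signed complete bipartite graph `(K_{k,k}, M)`: both parts are copies of `Fin k`, every
left vertex is adjacent to every right vertex, and the edge between `inl i` and `inr j` is
negative iff `i = j` (the perfect matching `M`). -/
def kkkSign (k : ℕ) : Sym2 (Fin k ⊕ Fin k) → ℤˣ :=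
  Sym2.lift ⟨fun a b => if Sum.elim id id a = Sum.elim id id b then -1 else 1, by
    intro a b
    simp only [eq_comm]⟩

/-!
Both targets have their vertices grouped into `k` classes (the matched pairs `{2i, 2i+1}` of
`K_{2k}`, the pairs `{inl i, inr i}` of `K_{k,k}`) and an edge is negative iff its ends lie in
the same class. So a map that keeps the class of every vertex carries the edge signs, hence
the walk signs, of one target to the other. Forwards, `K_{k,k}` embeds in `K_{2k}` by
`inl i ↦ 2i`, `inr i ↦ 2i+1`; backwards, a proper 2-colouring of `G` chooses the side of
`K_{k,k}` and the pair index `⌊f v / 2⌋` the vertex within it.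
-/

section WalkSign

variable {U V : Type*} {G : SimpleGraph U}

lemma walkSign_congr {σ σ' : Sym2 U → ℤˣ} (h : ∀ e ∈ G.edgeSet, σ e = σ' e) {u v : U}
    (w : G.Walk u v) : walkSign σ w = walkSign σ' w :=
  congrArg List.prod <| List.map_congr_left fun e he => h e (w.edges_subset_edgeSet he)

lemma walkSign_map {H : SimpleGraph V} (f : G →g H) (π : Sym2 V → ℤˣ) {u v : U}
    (w : G.Walk u v) : walkSign π (w.map f) = walkSign (π ∘ Sym2.map f) w := by
  simp only [walkSign, Walk.edges_map, List.map_map]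

lemma IsSignedHom.of_sign_eq {W : Type*} {σ : Sym2 U → ℤˣ} {H : SimpleGraph V}
    {π : Sym2 V → ℤˣ} {H' : SimpleGraph W} {π' : Sym2 W → ℤˣ} {f : G →g H}
    (hf : IsSignedHom G σ H π f) (g : G →g H')
    (hsign : ∀ ⦃u v⦄, G.Adj u v → π' s(g u, g v) = π s(f u, f v)) :
    IsSignedHom G σ H' π' g := by
  intro u w
  have hedges : ∀ e ∈ G.edgeSet, (π' ∘ Sym2.map g) e = (π ∘ Sym2.map f) e := by
    rintro ⟨a, b⟩ hab
    exact hsign hab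
  rw [walkSign_map, walkSign_congr hedges, ← walkSign_map, hf]

end WalkSign

section Targets

variable {k : ℕ}

def pairIndex (x : Fin (2 * k)) : Fin k :=
  ⟨x / 2, by omega⟩

lemma matchSign_mk (x y : Fin (2 * k)) :
    matchSign (2 * k) s(x, y) = if pairIndex x = pairIndex y then -1 else 1 := by
  simp only [matchSign, pairIndex, Sym2.lift_mk, Fin.ext_iff]

lemma kkkSign_eq_matchSign {a b : Fin k ⊕ Fin k} {x y : Fin (2 * k)}
    (ha : Sum.elim id id a = pairIndex x) (hb : Sum.elim id id b = pairIndex y) :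
    kkkSign k s(a, b) = matchSign (2 * k) s(x, y) := by
  rw [matchSign_mk, ← ha, ← hb]
  rfl

def completeBipartiteToMatching (k : ℕ) : Fin k ⊕ Fin k → Fin (2 * k) :=
  Sum.elim (fun i => ⟨2 * i, by omega⟩) (fun i => ⟨2 * i + 1, by omega⟩)

lemma pairIndex_completeBipartiteToMatching (a : Fin k ⊕ Fin k) :
    pairIndex (completeBipartiteToMatching k a) = Sum.elim id id a := by
  rcases a with i | i <;> ext <;>
    simp only [pairIndex, completeBipartiteToMatching, Sum.elim_inl, Sum.elim_inr, id] <;> omega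

def completeBipartiteHomTop (k : ℕ) :
    completeBipartiteGraph (Fin k) (Fin k) →g (⊤ : SimpleGraph (Fin (2 * k))) where
  toFun := completeBipartiteToMatching k
  map_rel' := by
    rintro (i | i) (j | j) hadj heq <;>
      simp [completeBipartiteToMatching, Fin.ext_iff] at hadj heq <;> omega

end Targets

section Colouring

variable {V α : Type*} {G : SimpleGraph V}

def SimpleGraph.Coloring.toCompleteBipartite (C : G.Coloring (Fin 2)) (p : V → α) :
    G →g completeBipartiteGraph α α where
  toFun v := if C v = 0 then Sum.inl (p v) else Sum.inr (p v)
  map_rel' {u v} huv := by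
    have hne : C u ≠ C v := C.valid huv
    by_cases hu : C u = 0 <;> by_cases hv : C v = 0
    · exact absurd (hu.trans hv.symm) hne
    · simp [hu, hv]
    · simp [hu, hv]
    · exact absurd ((Fin.eq_one_of_ne_zero _ hu).trans (Fin.eq_one_of_ne_zero _ hv).symm) hne

lemma SimpleGraph.Coloring.elim_toCompleteBipartite (C : G.Coloring (Fin 2)) (p : V → α) (v : V) :
    Sum.elim id id (C.toCompleteBipartite p v) = p v := by
  by_cases hv : C v = 0 <;> simp [Coloring.toCompleteBipartite, hv]

end Colouring

theorem signedHom_kkk_iff_signedHom_k2k_general {V : Type*} (k : ℕ)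
    (G : SimpleGraph V) (σ : Sym2 V → ℤˣ) (hbip : G.Colorable 2) :
    SignedHom G σ (completeBipartiteGraph (Fin k) (Fin k)) (kkkSign k) ↔
      SignedHom G σ (⊤ : SimpleGraph (Fin (2 * k))) (matchSign (2 * k)) := by
  constructor
  · rintro ⟨f, hf⟩
    refine ⟨(completeBipartiteHomTop k).comp f, hf.of_sign_eq _ fun u v _ => ?_⟩
    exact (kkkSign_eq_matchSign (pairIndex_completeBipartiteToMatching _).symm
      (pairIndex_completeBipartiteToMatching _).symm).symm
  · rintro ⟨f, hf⟩
    obtain ⟨C⟩ := hbip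
    refine ⟨C.toCompleteBipartite (pairIndex ∘ f), hf.of_sign_eq _ fun u v _ => ?_⟩
    exact kkkSign_eq_matchSign (C.elim_toCompleteBipartite _ u) (C.elim_toCompleteBipartite _ v)

/-- A signed bipartite graph maps to `(K_{k,k}, M)` iff it maps to `(K_{2k}, M)`. -/
theorem signedHom_kkk_iff_signedHom_k2k {V : Type*} (k : ℕ) (hk : 1 ≤ k)
    (G : SimpleGraph V) (σ : Sym2 V → ℤˣ) (hbip : G.Colorable 2) :
    SignedHom G σ (completeBipartiteGraph (Fin k) (Fin k)) (kkkSign k) ↔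
      SignedHom G σ (⊤ : SimpleGraph (Fin (2 * k))) (matchSign (2 * k)) :=
  signedHom_kkk_iff_signedHom_k2k_general k G σ hbip
end

section
/- Let k ≥ 2 and let (C_{2k},σ) be a signed even cycle on vertices v_1, v_2, …, v_{2k} (in cyclic order), and let L be a list assignment such that L(v_i) is a neighbored 5-set for every even i and a paired set of size 10 for every odd i. Then (C_{2k},σ) admits an L-coloring. -/
open SimpleGraph

/-- The color set `C`: the vertex set of `DSG(K_6, M)`, encoding `x^+` as `(x, 1)` and `x^−`
as `(x, -1)` for `x` a vertex of `K_6`. -/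
abbrev ColorC : Type := Fin 6 × ℤˣ

/-- The perfect matching on the vertices of `K_6`: `0↔1, 2↔3, 4↔5` (i.e. `12, 34, 56`). -/
def pairFn : Fin 6 → Fin 6 := ![1, 0, 3, 2, 5, 4]

/-- The pair of a color: the matched `K_6`-vertex on the same side. -/
def pairC (c : ColorC) : ColorC := (pairFn c.1, c.2)

/-- Two colors lie in the same layer iff their `K_6`-vertices lie in the same matched pair. -/
def SameLayer (c d : ColorC) : Prop := (c.1 : ℕ) / 2 = (d.1 : ℕ) / 2

/-- The underlying graph of `DSG(K_6, M)`: `(x, s)` is adjacent to `(y, t)` iff `x ≠ y`. -/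
def DSG6 : SimpleGraph ColorC where
  Adj a b := a.1 ≠ b.1
  symm := ⟨fun _ _ h => Ne.symm h⟩
  loopless := ⟨fun _ h => h rfl⟩

/-- The sign of the `DSG(K_6, M)`-edge between colors `c` and `d`: it is
`c.2 * d.2 * π(c.1 d.1)` where `π` is the signature of `(K_6, M)` (negative exactly on the
matching `12, 34, 56`). -/
def dsgSign (c d : ColorC) : ℤˣ :=
  c.2 * d.2 * (if (c.1 : ℕ) / 2 = (d.1 : ℕ) / 2 then -1 else 1)

/-- A set of colors is paired if for all but at most one of its elements, the pair of the
element also lies in the set. -/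
def IsPaired (L : Set ColorC) : Prop := {c | c ∈ L ∧ pairC c ∉ L}.Subsingleton

/-- A set of colors is layered if it is paired and no three of its colors lie in a common
layer. -/
def IsLayered (L : Set ColorC) : Prop :=
  IsPaired L ∧ ∀ j : ℕ, {c | c ∈ L ∧ (c.1 : ℕ) / 2 = j}.ncard ≤ 2

/-- A set of colors is one-sided if all its colors lie on the same side. -/
def IsOneSided (L : Set ColorC) : Prop :=
  (∀ c ∈ L, c.2 = 1) ∨ (∀ c ∈ L, c.2 = -1)

/-- A neighbored `(2k+1)`-set: a layered set of size `2k+1` consisting of `k` pairs all on one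
side together with a single color on the other side. -/
def IsNeighbored (k : ℕ) (L : Set ColorC) : Prop :=
  IsLayered L ∧ L.ncard = 2 * k + 1 ∧
    ∃ α : ℤˣ, ∃ c ∈ L, c.2 = -α ∧ ∀ d ∈ L, d ≠ c → d.2 = α ∧ pairC d ∈ L

/-- An `L`-coloring of a signed graph `(G, σ)` with list assignment `L`: an edge-sign
preserving homomorphism `φ` of `(G, σ)` to `DSG(K_6, M)` with `φ v ∈ L v` for all `v`. -/
def IsLColoring {V : Type*} (G : SimpleGraph V) (σ : Sym2 V → ℤˣ)
    (L : V → Set ColorC) (φ : V → ColorC) : Prop :=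
  (∀ v, φ v ∈ L v) ∧
  ∀ u v : V, G.Adj u v → (φ u).1 ≠ (φ v).1 ∧ dsgSign (φ u) (φ v) = σ s(u, v)

/-!
A paired 10-set is the complement of a pair `{p, pairC p}`, and a neighbored 5-set offers two
colors of distinct layers on a side `α` and one color on side `-α`. Once the 5-set vertices are
colored, the 10-set vertex between two of them can be colored unless an explicit obstruction
(`Blocked`, depending only on the layers and sides involved) occurs; this is a finite check in
`DSG(K_6, M)`. Avoiding all obstructions is a constraint problem on a cycle of length `k`. From any
color, the next 5-set vertex has an unobstructed choice among its two same-side colors, so colors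
can be propagated greedily around the cycle from a start whose closing constraint holds
automatically. Such a start exists unless the same-side layer pairs agree all around the cycle,
and then one constant layer works everywhere.
-/

theorem pairC_pairC : ∀ c : ColorC, pairC (pairC c) = c := by decide

theorem pairC_ne : ∀ c : ColorC, pairC c ≠ c := by decide

theorem dsgSign_comm : ∀ c d : ColorC, dsgSign c d = dsgSign d c := by decide

theorem card_colorC : Nat.card ColorC = 12 := by
  rw [Nat.card_eq_fintype_card]; decide

theorem units_eq_or_eq_neg : ∀ a b : ℤˣ, a = b ∨ a = -b := by decide

def layer (c : ColorC) : Fin 3 := ⟨(c.1 : ℕ) / 2, by omega⟩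

theorem IsPaired.eq_compl_pair {L : Set ColorC} (hL : IsPaired L) (hcard : L.ncard = 10) :
    ∃ p, L = {p, pairC p}ᶜ := by
  have hcompl : Lᶜ.ncard = 2 := by
    have := Set.ncard_add_ncard_compl L
    rw [card_colorC, hcard] at this
    omega
  obtain ⟨p, q, hpq, hpqL⟩ := Set.ncard_eq_two.mp hcompl
  have hmem : ∀ c, c ∈ L ↔ c ≠ p ∧ c ≠ q := fun c => by
    rw [← not_iff_not, ← Set.mem_compl_iff, hpqL]; simp [or_iff_not_and_not]
  refine ⟨p, ?_⟩
  suffices hq : q = pairC p by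
    ext c; rw [hmem, hq]; simp
  by_contra hq
  have hunpaired : ∀ c, c = p ∨ c = q → pairC c ∈ {c | c ∈ L ∧ pairC c ∉ L} := by
    rintro c (rfl | rfl) <;> simp only [Set.mem_ofPred_eq, hmem, pairC_pairC] <;>
      grind [pairC_pairC, pairC_ne]
  have := hL (hunpaired p (.inl rfl)) (hunpaired q (.inr rfl))
  exact hpq (by rw [← pairC_pairC p, this, pairC_pairC])

theorem IsNeighbored.exists_layers {L : Set ColorC} (h : IsNeighbored 2 L) :
    ∃ (α : ℤˣ) (lA lB z : Fin 3), lA ≠ lB ∧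
      ∀ y, y = (lA, α) ∨ y = (lB, α) ∨ y = (z, -α) → ∃ c ∈ L, (layer c, c.2) = y := by
  obtain ⟨⟨-, hlayer⟩, hcard, α, c, hc, hcα, hrest⟩ := h
  obtain ⟨d, hd⟩ : (L \ {c}).Nonempty := by
    rw [← Set.ncard_pos (Set.toFinite _), Set.ncard_sdiff_singleton_of_mem hc, hcard]; omega
  obtain ⟨e, he, hde⟩ : ∃ e ∈ L \ {c}, layer d ≠ layer e := by
    by_contra! hall
    have hsub : L \ {c} ⊆ {x | x ∈ L ∧ (x.1 : ℕ) / 2 = (d.1 : ℕ) / 2} := fun x hx =>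
      ⟨hx.1, (congrArg Fin.val (hall x hx)).symm⟩
    have := Set.ncard_le_ncard hsub (Set.toFinite _)
    rw [Set.ncard_sdiff_singleton_of_mem hc, hcard] at this
    have := hlayer ((d.1 : ℕ) / 2)
    omega
  refine ⟨α, layer d, layer e, layer c, hde, ?_⟩
  rintro y (rfl | rfl | rfl)
  · exact ⟨d, hd.1, by rw [(hrest d hd.1 hd.2).1]⟩
  · exact ⟨e, he.1, by rw [(hrest e he.1 he.2).1]⟩
  · exact ⟨c, hc, by rw [hcα]⟩

/-- The obstruction to coloring a vertex from the complement of the pair of layer `J` on side `T`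
when its neighbours have colors of (layer, side) `x` and `y` and the edges to them have signs `A`
and `B`: either the neighbours share a layer and the signs are inconsistent, or they lie in two
layers other than `J` and the only admissible colors, the pair of the third layer on side `T`, are
the excluded ones. -/
def Blocked (J : Fin 3) (T A B : ℤˣ) (x y : Fin 3 × ℤˣ) : Prop :=
  (x.1 = y.1 ∧ A * x.2 ≠ B * y.2) ∨
    (x.1 ≠ y.1 ∧ x.1 ≠ J ∧ y.1 ≠ J ∧ A * x.2 = T ∧ B * y.2 = T)

instance (J : Fin 3) (T A B : ℤˣ) : DecidableRel (Blocked J T A B) := fun _ _ => by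
  unfold Blocked; infer_instance

theorem exists_middle_color (p c e : ColorC) (s₁ s₂ : ℤˣ)
    (h : ¬Blocked (layer p) p.2 s₁ s₂ (layer c, c.2) (layer e, e.2)) :
    ∃ f, f ≠ p ∧ f ≠ pairC p ∧ f.1 ≠ c.1 ∧ f.1 ≠ e.1 ∧ dsgSign c f = s₁ ∧ dsgSign f e = s₂ := by
  revert p c e s₁ s₂
  decide

section Blocked

variable {J : Fin 3} {T A B a b : ℤˣ} {l₁ l₂ : Fin 3}

theorem not_blocked_right_or (x : Fin 3 × ℤˣ) (hl : l₁ ≠ l₂) :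
    ¬Blocked J T A B x (l₁, b) ∨ ¬Blocked J T A B x (l₂, b) := by
  revert x b l₁ l₂ J T A B
  decide

theorem not_blocked_left_or (y : Fin 3 × ℤˣ) (hl : l₁ ≠ l₂) :
    ¬Blocked J T A B (l₁, a) y ∨ ¬Blocked J T A B (l₂, a) y := by
  revert y a l₁ l₂ J T A B
  decide

theorem not_blocked_of_mul_eq (h : A * a = B * b) : ¬Blocked J T A B (l₁, a) (l₁, b) := by
  simp [Blocked, h]

theorem not_blocked_neg_right (h : A * a = -(B * b)) (hT : T = -(A * a)) :
    ¬Blocked J T A B (l₁, a) (l₂, -b) := by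
  revert J T A B a b l₁ l₂
  decide

theorem not_blocked_neg_left (h : A * a = -(B * b)) (hT : T = A * a) :
    ¬Blocked J T A B (l₁, -a) (l₂, b) := by
  revert J T A B a b l₁ l₂
  decide

set_option synthInstance.maxSize 2000 in
theorem eq_or_eq_of_blocked (l₁' l₂' : Fin 3) (hab : A * a = B * b) (hl : l₁ ≠ l₂)
    (h₁ : ∃ y, (y = (l₁', b) ∨ y = (l₂', b)) ∧ Blocked J T A B (l₁, a) y)
    (h₂ : ∃ y, (y = (l₁', b) ∨ y = (l₂', b)) ∧ Blocked J T A B (l₂, a) y) :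
    l₁ = l₁' ∨ l₁ = l₂' := by
  revert J T A B a b l₁ l₂ l₁' l₂'
  decide

end Blocked

section CycleGreedy

variable {k : ℕ} [NeZero k] {γ : Type*} {P M : ZMod k → γ → Prop} {R : ZMod k → γ → γ → Prop}

theorem ZMod.forall_of_add_one {Q : ZMod k → Prop} (h0 : Q 0) (hs : ∀ i, Q i → Q (i + 1))
    (i : ZMod k) : Q i := by
  rw [← ZMod.natCast_zmod_val i]
  induction i.val with
  | zero => simpa using h0
  | succ n ih => simpa using hs _ ih

theorem exists_cycle_solution_of_forward_start (hk : 2 ≤ k) (hMP : ∀ i x, M i x → P i x)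
    (hnext : ∀ i x, ∃ y, M (i + 1) y ∧ R i x y) (i₀ : ZMod k) (v₀ : γ) (hv₀ : P i₀ v₀)
    (hclose : ∀ x, M (i₀ - 1) x → R (i₀ - 1) x v₀) :
    ∃ x : ZMod k → γ, (∀ i, P i (x i)) ∧ ∀ i, R i (x i) (x (i + 1)) := by
  choose next hnextM hnextR using hnext
  let g : ℕ → γ := fun t => Nat.rec v₀ (fun t y => next (i₀ + t) y) t
  have hgM : ∀ t : ℕ, M (i₀ + (t + 1 : ℕ)) (g (t + 1)) := fun t => by
    simpa [add_assoc] using hnextM (i₀ + t) (g t)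
  have hgR : ∀ t : ℕ, R (i₀ + t) (g t) (g (t + 1)) := fun t => hnextR (i₀ + t) (g t)
  have hidx : ∀ i, i₀ + ((i - i₀).val : ZMod k) = i := fun i => by
    rw [ZMod.natCast_zmod_val, add_sub_cancel]
  refine ⟨fun i => g (i - i₀).val, fun i => ?_, fun i => ?_⟩
  · show P i (g (i - i₀).val)
    rcases ht : (i - i₀).val with _ | t
    · rw [show i = i₀ by simpa [ht] using (hidx i).symm]
      exact hv₀
    · rw [← hidx i, ht]
      exact hMP _ _ (hgM t)
  · show R i (g (i - i₀).val) (g (i + 1 - i₀).val)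
    have hi := hidx i
    have hlt := ZMod.val_lt (i - i₀)
    set t := (i - i₀).val
    rcases Nat.lt_or_ge (t + 1) k with h | h
    · have hsucc : (i + 1 - i₀).val = t + 1 := by
        rw [← ZMod.val_cast_of_lt h, Nat.cast_add_one, ← hi]
        ring_nf
      rw [hsucc]
      simpa only [hi] using hgR t
    · obtain ⟨s, hs⟩ : ∃ s, t = s + 1 := ⟨t - 1, by omega⟩
      have hwrap : i + 1 = i₀ := by
        rw [← hi, add_assoc, ← Nat.cast_add_one, show t + 1 = k by omega, ZMod.natCast_self,
          add_zero]
      have hprev : i = i₀ - 1 := by rw [← hwrap, add_sub_cancel_right]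
      have hM : M (i₀ - 1) (g (s + 1)) := by rw [← hprev, ← hi, hs]; exact hgM s
      rw [hwrap, sub_self, ZMod.val_zero, hs, hprev]
      exact hclose _ hM

theorem exists_cycle_solution_of_backward_start (hk : 2 ≤ k) (hMP : ∀ i x, M i x → P i x)
    (hprev : ∀ i y, ∃ x, M i x ∧ R i x y) (i₀ : ZMod k) (v₀ : γ) (hv₀ : P i₀ v₀)
    (hclose : ∀ y, M (i₀ + 1) y → R i₀ v₀ y) :
    ∃ x : ZMod k → γ, (∀ i, P i (x i)) ∧ ∀ i, R i (x i) (x (i + 1)) := by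
  have hnext : ∀ i x, ∃ y, M (-(i + 1)) y ∧ R (-i - 1) y x := fun i x => by
    rw [neg_add']; exact hprev _ x
  have hclose' : ∀ y, M (-(-i₀ - 1)) y → R (-(-i₀ - 1) - 1) v₀ y := by
    rw [show -(-i₀ - 1) = i₀ + 1 by ring, add_sub_cancel_right]; exact hclose
  obtain ⟨x, hxP, hxR⟩ := exists_cycle_solution_of_forward_start (P := fun i => P (-i))
    (M := fun i => M (-i)) (R := fun i x y => R (-i - 1) y x) hk (fun i x => hMP (-i) x)
    hnext (-i₀) v₀ (by simpa using hv₀) hclose'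
  refine ⟨fun i => x (-i), fun i => by simpa using hxP (-i), fun i => ?_⟩
  convert hxR (-i - 1) using 2 <;> ring

end CycleGreedy

section UnblockedChoice

variable {k : ℕ} [NeZero k] {J : ZMod k → Fin 3} {T A B α : ZMod k → ℤˣ} {lA lB : ZMod k → Fin 3}

theorem exists_unblocked_same_side_choice (hl : ∀ i, lA i ≠ lB i)
    (hE : ∀ m, A m * α m = B m * α (m + 1))
    (hblocked : ∀ m x, x = (lA m, α m) ∨ x = (lB m, α m) →
      ∃ y, (y = (lA (m + 1), α (m + 1)) ∨ y = (lB (m + 1), α (m + 1))) ∧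
        Blocked (J m) (T m) (A m) (B m) x y) :
    ∃ x : ZMod k → Fin 3 × ℤˣ, (∀ i, x i = (lA i, α i) ∨ x i = (lB i, α i)) ∧
      ∀ i, ¬Blocked (J i) (T i) (A i) (B i) (x i) (x (i + 1)) := by
  have hpair : ∀ m l, l = lA m ∨ l = lB m → l = lA (m + 1) ∨ l = lB (m + 1) := by
    rintro m l (rfl | rfl)
    · exact eq_or_eq_of_blocked _ _ (hE m) (hl m)
        (hblocked m _ (.inl rfl)) (hblocked m _ (.inr rfl))
    · exact eq_or_eq_of_blocked _ _ (hE m) (hl m).symm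
        (hblocked m _ (.inr rfl)) (hblocked m _ (.inl rfl))
  have hconst : ∀ i, lA 0 = lA i ∨ lA 0 = lB i :=
    ZMod.forall_of_add_one (.inl rfl) fun i => hpair i (lA 0)
  refine ⟨fun i => (lA 0, α i), fun i => ?_, fun i => not_blocked_of_mul_eq (hE i)⟩
  rcases hconst i with h | h <;> simp [h]

theorem exists_unblocked_choice (hk : 2 ≤ k) (z : ZMod k → Fin 3) (hl : ∀ i, lA i ≠ lB i) :
    ∃ x : ZMod k → Fin 3 × ℤˣ,
      (∀ i, x i = (lA i, α i) ∨ x i = (lB i, α i) ∨ x i = (z i, -α i)) ∧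
      ∀ i, ¬Blocked (J i) (T i) (A i) (B i) (x i) (x (i + 1)) := by
  let M : ZMod k → Fin 3 × ℤˣ → Prop := fun i x => x = (lA i, α i) ∨ x = (lB i, α i)
  have hMP : ∀ i x, M i x → x = (lA i, α i) ∨ x = (lB i, α i) ∨ x = (z i, -α i) :=
    fun _ _ h => h.imp_right .inl
  have hnext : ∀ i x, ∃ y, M (i + 1) y ∧ ¬Blocked (J i) (T i) (A i) (B i) x y := fun i x =>
    (not_blocked_right_or x (hl (i + 1))).elim (⟨_, .inl rfl, ·⟩) (⟨_, .inr rfl, ·⟩)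
  have hprev : ∀ i y, ∃ x, M i x ∧ ¬Blocked (J i) (T i) (A i) (B i) x y := fun i y =>
    (not_blocked_left_or y (hl i)).elim (⟨_, .inl rfl, ·⟩) (⟨_, .inr rfl, ·⟩)
  have forward := exists_cycle_solution_of_forward_start hk hMP hnext
  have backward := exists_cycle_solution_of_backward_start hk hMP hprev
  -- A sign flip at `m` lets the single color at `m` or at `m + 1` start the propagation.
  by_cases hflip : ∃ m, A m * α m = -(B m * α (m + 1))
  · obtain ⟨m, hm⟩ := hflip
    rcases units_eq_or_eq_neg (T m) (A m * α m) with hT | hT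
    · refine backward m _ (.inr (.inr rfl)) ?_
      rintro y (rfl | rfl) <;> exact not_blocked_neg_left hm hT
    · refine forward (m + 1) _ (.inr (.inr rfl)) ?_
      rw [add_sub_cancel_right]
      rintro x (rfl | rfl) <;> exact not_blocked_neg_right hm hT
  push Not at hflip
  have hE : ∀ m, A m * α m = B m * α (m + 1) :=
    fun m => (units_eq_or_eq_neg _ _).resolve_right (hflip m)
  by_cases hstart : ∃ m x, M m x ∧ ∀ y, M (m + 1) y → ¬Blocked (J m) (T m) (A m) (B m) x y
  · obtain ⟨m, x, hx, hxy⟩ := hstart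
    exact backward m x (hMP _ _ hx) hxy
  push Not at hstart
  obtain ⟨x, hx, hxR⟩ := exists_unblocked_same_side_choice hl hE hstart
  exact ⟨x, fun i => hMP _ _ (hx i), hxR⟩

end UnblockedChoice

section CycleIndex

variable {k : ℕ} [NeZero k]

def oddVertex (i : ZMod k) : Fin (2 * k) := ⟨2 * i.val + 1, by have := ZMod.val_lt i; omega⟩

@[simp]
theorem oddVertex_val (i : ZMod k) : (oddVertex i).val = 2 * i.val + 1 := rfl

theorem Fin.val_add_one_mod_two (v : Fin (2 * k)) : (v + 1).val % 2 = (v.val + 1) % 2 := by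
  rw [Fin.val_add, Fin.val_one', Nat.add_mod_mod, Nat.mod_mod_of_dvd _ (dvd_mul_right 2 k)]

theorem oddVertex_val_mod_two (i : ZMod k) : (oddVertex i).val % 2 = 1 := by
  rw [oddVertex_val]; omega

theorem oddVertex_add_one_val_mod_two (i : ZMod k) : (oddVertex i + 1).val % 2 = 0 := by
  rw [Fin.val_add_one_mod_two, oddVertex_val]; omega

theorem oddVertex_of_val_mod_two (v : Fin (2 * k)) (hv : v.val % 2 = 1) :
    oddVertex ((v.val / 2 : ℕ) : ZMod k) = v := by
  ext
  rw [oddVertex_val, ZMod.val_natCast, Nat.mod_eq_of_lt (by omega)]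
  omega

theorem exists_eq_oddVertex (v : Fin (2 * k)) : ∃ i, v = oddVertex i ∨ v = oddVertex i + 1 := by
  rcases Nat.mod_two_eq_zero_or_one v.val with hv | hv
  · have hodd := Fin.val_add_one_mod_two (v - 1)
    rw [sub_add_cancel] at hodd
    exact ⟨_, .inr (by rw [oddVertex_of_val_mod_two (v - 1) (by omega), sub_add_cancel])⟩
  · exact ⟨_, .inl (oddVertex_of_val_mod_two v hv).symm⟩

theorem oddVertex_add_one_add_one (i : ZMod k) : oddVertex i + 1 + 1 = oddVertex (i + 1) := by
  have hi := ZMod.val_lt i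
  have h2k : 1 % (2 * k) = 1 := Nat.mod_eq_of_lt (by omega)
  ext
  rw [Fin.val_add, Fin.val_add, Fin.val_one', h2k, oddVertex_val, oddVertex_val, ZMod.val_add,
    ZMod.val_one_eq_one_mod, Nat.add_mod_mod]
  rcases Nat.lt_or_ge (i.val + 1) k with h | h
  · rw [Nat.mod_eq_of_lt h, Nat.mod_eq_of_lt (show 2 * i.val + 1 + 1 < 2 * k by omega),
      Nat.mod_eq_of_lt (show 2 * i.val + 1 + 1 + 1 < 2 * k by omega)]
    ring
  · rw [show i.val + 1 = k by omega, Nat.mod_self, show 2 * i.val + 1 + 1 = 2 * k by omega,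
      Nat.mod_self, zero_add, h2k]

def interleave {α : Type*} (x f : ZMod k → α) (v : Fin (2 * k)) : α :=
  if v.val % 2 = 1 then x (v.val / 2 : ℕ) else f ((v - 1).val / 2 : ℕ)

theorem interleave_oddVertex {α : Type*} (x f : ZMod k → α) (i : ZMod k) :
    interleave x f (oddVertex i) = x i := by
  simp [interleave, Nat.mul_add_div]

theorem interleave_oddVertex_add_one {α : Type*} (x f : ZMod k → α) (i : ZMod k) :
    interleave x f (oddVertex i + 1) = f i := by
  simp [interleave, oddVertex_add_one_val_mod_two, Nat.mul_add_div]

end CycleIndex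

theorem isLColoring_cycleGraph {n : ℕ} [NeZero n] (σ : Sym2 (Fin n) → ℤˣ) (L : Fin n → Set ColorC)
    (φ : Fin n → ColorC) (hmem : ∀ v, φ v ∈ L v)
    (hstep : ∀ u, (φ u).1 ≠ (φ (u + 1)).1 ∧ dsgSign (φ u) (φ (u + 1)) = σ s(u, u + 1)) :
    IsLColoring (cycleGraph n) σ L φ := by
  refine ⟨hmem, fun u v huv => ?_⟩
  have hone : ∀ w : Fin n, w.val = 1 → w = 1 := fun w hw => by
    ext; rw [hw, Fin.val_one', Nat.mod_eq_of_lt (by omega)]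
  rcases cycleGraph_adj'.mp huv with h | h
  · obtain rfl : u = v + 1 := by rw [← hone _ h, add_sub_cancel]
    exact ⟨(hstep v).1.symm, by rw [dsgSign_comm, (hstep v).2, Sym2.eq_swap]⟩
  · obtain rfl : v = u + 1 := by rw [← hone _ h, add_sub_cancel]
    exact hstep u

theorem isLColoring_interleave {k : ℕ} [NeZero k] (σ : Sym2 (Fin (2 * k)) → ℤˣ)
    (L : Fin (2 * k) → Set ColorC) (x f : ZMod k → ColorC)
    (hx : ∀ i, x i ∈ L (oddVertex i)) (hf : ∀ i, f i ∈ L (oddVertex i + 1))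
    (hxf : ∀ i, (x i).1 ≠ (f i).1 ∧ dsgSign (x i) (f i) = σ s(oddVertex i, oddVertex i + 1))
    (hfx : ∀ i, (f i).1 ≠ (x (i + 1)).1 ∧
      dsgSign (f i) (x (i + 1)) = σ s(oddVertex i + 1, oddVertex (i + 1))) :
    IsLColoring (cycleGraph (2 * k)) σ L (interleave x f) := by
  apply isLColoring_cycleGraph
  · intro v
    obtain ⟨i, rfl | rfl⟩ := exists_eq_oddVertex v
    · simpa only [interleave_oddVertex] using hx i
    · simpa only [interleave_oddVertex_add_one] using hf i
  · intro u
    obtain ⟨i, rfl | rfl⟩ := exists_eq_oddVertex u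
    · simpa only [interleave_oddVertex, interleave_oddVertex_add_one] using hxf i
    · simpa only [oddVertex_add_one_add_one, interleave_oddVertex,
        interleave_oddVertex_add_one] using hfx i

/-- The vertex `v_i` of the paper is the vertex `i - 1` of `cycleGraph (2 * k)`. -/
theorem evenCycle_LColorable (k : ℕ) (hk : 2 ≤ k) (σ : Sym2 (Fin (2 * k)) → ℤˣ)
    (L : Fin (2 * k) → Set ColorC)
    (hL : ∀ i : Fin (2 * k),
      ((i : ℕ) % 2 = 1 → IsNeighbored 2 (L i)) ∧
      ((i : ℕ) % 2 = 0 → IsPaired (L i) ∧ (L i).ncard = 10)) :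
    ∃ φ, IsLColoring (cycleGraph (2 * k)) σ L φ := by
  have : NeZero k := ⟨by omega⟩
  choose α lA lB z hl hlayers using fun i : ZMod k =>
    ((hL (oddVertex i)).1 (oddVertex_val_mod_two i)).exists_layers
  choose p hp using fun i : ZMod k =>
    have h := (hL (oddVertex i + 1)).2 (oddVertex_add_one_val_mod_two i)
    h.1.eq_compl_pair h.2
  obtain ⟨y, hy, hfree⟩ := exists_unblocked_choice (J := fun i => layer (p i))
    (T := fun i => (p i).2) (A := fun i => σ s(oddVertex i, oddVertex i + 1))
    (B := fun i => σ s(oddVertex i + 1, oddVertex (i + 1))) hk z hl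
  choose x hxL hxy using fun i => hlayers i (y i) (hy i)
  choose f hfp hfp' hxf hfx hs₁ hs₂ using fun i =>
    exists_middle_color (p i) (x i) (x (i + 1)) _ _ (by rw [hxy, hxy]; exact hfree i)
  exact ⟨_, isLColoring_interleave σ L x f hxL (fun i => by simp [hp i, hfp i, hfp' i])
    (fun i => ⟨(hxf i).symm, hs₁ i⟩) (fun i => ⟨hfx i, hs₂ i⟩)⟩
end

section
/- Let (T,σ) be a signed tree with vertex set {v, v_0, v_1, v_1', v_2} and edges v v_0, v_0 v_1, v_1 v_1', v_0 v_2 (with an arbitrary signature σ), and let L be a list assignment with L(v_1') and L(v_2) singletons and L(v) = L(v_0) = L(v_1) = C. Then the set of colors c ∈ C for which there exists an L-coloring φ of (T,σ) with φ(v) = c has size at least 8. -/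
open SimpleGraph

/-- The signed tree of Lemma 3.5: vertices `v, v₀, v₁, v₁', v₂` (encoded as `0, 1, 2, 3, 4`)
with edges `v v₀, v₀ v₁, v₁ v₁', v₀ v₂`. -/
def treeT : SimpleGraph (Fin 5) :=
  SimpleGraph.fromEdgeSet {s(0, 1), s(1, 2), s(2, 3), s(1, 4)}

/-!
A signed walk of length two in `DSG(K_6, M)`, with any prescribed pair of signs, joins any two
colors in different layers. So every color of `v₀` outside the layer of `c₃` extends to `v₁`,
and it suffices to count the colors `c` ending a signed walk `c₄ m c` whose middle color `m`
avoids the layer of `c₃`. Such a `c` is reached with both signs as soon as the admissible `m`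
include a vertex matched to `c` or to `c₄` and a vertex of the remaining layer; this leaves at
least `8` colors.
-/

def SignedAdj (s : ℤˣ) (a b : ColorC) : Prop := a.1 ≠ b.1 ∧ dsgSign a b = s

instance (s : ℤˣ) : DecidableRel (SignedAdj s) := fun _ _ =>
  inferInstanceAs (Decidable (_ ∧ _))

instance : DecidableRel SameLayer := fun _ _ => inferInstanceAs (Decidable (_ = _))

lemma dsgSign_comm_s19 (a b : ColorC) : dsgSign a b = dsgSign b a := by
  simp only [dsgSign, mul_comm a.2, eq_comm (a := (a.1 : ℕ) / 2)]

lemma SignedAdj.symm {s : ℤˣ} {a b : ColorC} (h : SignedAdj s a b) : SignedAdj s b a :=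
  ⟨h.1.symm, dsgSign_comm_s19 b a ▸ h.2⟩

-- The middle vertex is taken in the third layer or matched to `b`, according to the sign needed.
lemma SignedAdj.exists_path_of_not_sameLayer (s t : ℤˣ) {a b : ColorC} (h : ¬SameLayer a b) :
    ∃ m, SignedAdj s a m ∧ SignedAdj t m b := by
  revert s t a b
  decide

lemma eight_le_ncard_signedAdj_path_avoiding_layer (s t : ℤˣ) (a e : ColorC) :
    8 ≤ {c | ∃ m, SignedAdj s c m ∧ SignedAdj t m a ∧ ¬SameLayer m e}.ncard := by
  obtain ⟨x, -⟩ := e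
  change 8 ≤ {c | ∃ m, SignedAdj s c m ∧ SignedAdj t m a ∧ ¬SameLayer m (x, 1)}.ncard
  rw [Set.ncard_eq_toFinset_card', Set.toFinset_ofPred]
  revert s t a x
  decide

lemma isLColoring_treeT {σ : Sym2 (Fin 5) → ℤˣ} {L : Fin 5 → Set ColorC} {φ : Fin 5 → ColorC}
    (hL : ∀ v, φ v ∈ L v) (h01 : SignedAdj (σ s(0, 1)) (φ 0) (φ 1))
    (h12 : SignedAdj (σ s(1, 2)) (φ 1) (φ 2)) (h23 : SignedAdj (σ s(2, 3)) (φ 2) (φ 3))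
    (h14 : SignedAdj (σ s(1, 4)) (φ 1) (φ 4)) : IsLColoring treeT σ L φ := by
  have reverse {u v : Fin 5} (h : SignedAdj (σ s(u, v)) (φ u) (φ v)) :
      SignedAdj (σ s(v, u)) (φ v) (φ u) := Sym2.eq_swap ▸ h.symm
  refine ⟨hL, fun u v huv => ?_⟩
  obtain ⟨he, -⟩ := (fromEdgeSet_adj _).1 huv
  simp only [Set.mem_insert_iff, Set.mem_singleton_iff, Sym2.eq_iff] at he
  rcases he with (⟨rfl, rfl⟩ | ⟨rfl, rfl⟩) | (⟨rfl, rfl⟩ | ⟨rfl, rfl⟩) | (⟨rfl, rfl⟩ | ⟨rfl, rfl⟩) |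
    (⟨rfl, rfl⟩ | ⟨rfl, rfl⟩)
  exacts [h01, reverse h01, h12, reverse h12, h23, reverse h23, h14, reverse h14]

/-- Lemma 3.5: for the signed rooted tree `treeT` with `L(v₁')` and `L(v₂)` singletons and full
lists elsewhere, at least 8 colors are admissible at the root `v`. -/
theorem admissible_tree_ge_eight (σ : Sym2 (Fin 5) → ℤˣ) (c₃ c₄ : ColorC) :
    8 ≤ {c : ColorC |
        ∃ φ, IsLColoring treeT σ ![Set.univ, Set.univ, Set.univ, {c₃}, {c₄}] φ ∧
          φ 0 = c}.ncard := by
  refine (eight_le_ncard_signedAdj_path_avoiding_layer (σ s(0, 1)) (σ s(1, 4)) c₄ c₃).trans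
    (Set.ncard_le_ncard ?_ (Set.toFinite _))
  rintro c ⟨m, hcm, hm₄, hm₃⟩
  obtain ⟨b, hmb, hb₃⟩ := SignedAdj.exists_path_of_not_sameLayer (σ s(1, 2)) (σ s(2, 3)) hm₃
  refine ⟨![c, m, b, c₃, c₄], isLColoring_treeT ?_ hcm hmb hb₃ hm₄, rfl⟩
  intro v
  fin_cases v <;> simp
end
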